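/- arXiv:1409.4589 — 6 statements merged into one kernel-verified Lean document; each statement's English description precedes it below -/
import Mathlib

section
/- Let 𝔥 be the 8-dimensional real two-step nilpotent Lie algebra with basis (X_1,…,X_6, Z_1, Z_2) and nontrivial brackets [X_1,X_5] = [X_2,X_3] = Z_1 and [X_1,X_6] = [X_2,X_4] = Z_2. Then Cor(𝔥*) = {f ∈ 𝔥* : f(Z_1) = f(Z_2) = 0 and f(X_3)·f(X_6) = f(X_4)·f(X_5)}; that is, the cortex is the quadric t_3 t_6 = t_4 t_5 inside 𝔷^⊥. -/
/-!
Write `x` for the coordinates of `X` and put `a = ℓ(Z_1)`, `b = ℓ(Z_2)`. Then `ad*_X ℓ` vanishes on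
the centre, its values on `X_1, X_2` are `a x_5 + b x_6` and `a x_3 + b x_4`, and its values on
`X_3, …, X_6` form the rank-one matrix `-(x_2, x_1)ᵀ (a, b)`, whence `t_3 t_6 = t_4 t_5`.
Conversely every `2 × 2` matrix of rank at most one factors as `uᵀ (a, b)` with `(a, b) ≠ 0`,
after which `x_3, …, x_6` can be chosen to give any values on `X_1, X_2`. So the set of all
`ad*_X ℓ` is already the closed quadric, and taking the closure changes nothing.
-/

/-- The coadjoint action of the Lie algebra: `(coad X f) W = f ⁅W, X⁆`. -/
def coad {L : Type*} [LieRing L] [LieAlgebra ℝ L] (X : L) (f : Module.Dual ℝ L) :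
    Module.Dual ℝ L where
  toFun W := f ⁅W, X⁆
  map_add' a b := by simp [add_lie]
  map_smul' c a := by simp [smul_lie]

/-- The set `{ad*_X ℓ : X ∈ 𝔤, ℓ ∈ 𝔤*}` of all coadjoint tangent vectors. -/
def adStar (L : Type*) [LieRing L] [LieAlgebra ℝ L] : Set (Module.Dual ℝ L) :=
  {g | ∃ (X : L) (ℓ : Module.Dual ℝ L), g = coad X ℓ}

/-- Coordinates of a linear functional with respect to the dual basis of `B`;
this identifies `𝔤*` with `ι → ℝ`, carrying the canonical topology. -/
noncomputable def coords {ι : Type*} {L : Type*} [LieRing L] [LieAlgebra ℝ L]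
    (B : Module.Basis ι ℝ L) (f : Module.Dual ℝ L) : ι → ℝ := fun a => f (B a)

/-- The cortex `Cor(𝔤*)`: the closure (in the canonical topology of the
finite-dimensional space `𝔤*`, transported to coordinates via the dual basis)
of the set `{ad*_X ℓ : X ∈ 𝔤, ℓ ∈ 𝔤*}`. -/
def corSet {ι : Type*} {L : Type*} [LieRing L] [LieAlgebra ℝ L] (B : Module.Basis ι ℝ L) :
    Set (Module.Dual ℝ L) :=
  {f | coords B f ∈ closure (coords B '' adStar L)}

/-- Structure constants of the 8-dimensional Lie algebra `𝔥`: basis indices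
`0,…,5` are `X_1,…,X_6`, index `6` is `Z_1`, index `7` is `Z_2`; the only
nontrivial brackets are `⁅X_1,X_5⁆ = ⁅X_2,X_3⁆ = Z_1`, `⁅X_1,X_6⁆ = ⁅X_2,X_4⁆ = Z_2`. -/
def hBr {V : Type*} [AddCommGroup V] (B : Fin 8 → V) : Fin 8 → Fin 8 → V :=
  fun i j =>
    if i = 0 ∧ j = 4 ∨ i = 1 ∧ j = 2 then B 6
    else if i = 4 ∧ j = 0 ∨ i = 2 ∧ j = 1 then -B 6
    else if i = 0 ∧ j = 5 ∨ i = 1 ∧ j = 3 then B 7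
    else if i = 5 ∧ j = 0 ∨ i = 3 ∧ j = 1 then -B 7
    else 0


theorem Real.exists_rank_one_of_mul_eq_mul {p q r s : ℝ} (h : p * s = q * r) :
    ∃ a b u v : ℝ, (a ≠ 0 ∨ b ≠ 0) ∧ p = u * a ∧ q = u * b ∧ r = v * a ∧ s = v * b := by
  by_cases hpq : p = 0 ∧ q = 0
  · obtain ⟨rfl, rfl⟩ := hpq
    by_cases hrs : r = 0 ∧ s = 0
    · obtain ⟨rfl, rfl⟩ := hrs
      exact ⟨1, 0, 0, 0, by simp, by simp⟩
    · exact ⟨r, s, 0, 1, by tauto, by simp⟩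
  · have hn : p ^ 2 + q ^ 2 ≠ 0 := by
      contrapose! hpq
      constructor <;> nlinarith [sq_nonneg p, sq_nonneg q]
    refine ⟨p, q, 1, (r * p + s * q) / (p ^ 2 + q ^ 2), by tauto, by ring, by ring, ?_, ?_⟩ <;>
      field_simp
    · linear_combination -q * h
    · linear_combination p * h

theorem exists_mul_add_mul_eq {a b : ℝ} (hab : a ≠ 0 ∨ b ≠ 0) (c : ℝ) :
    ∃ y z : ℝ, a * y + b * z = c := by
  rcases hab with ha | hb
  · exact ⟨c / a, 0, by field_simp; ring⟩
  · exact ⟨0, c / b, by field_simp; ring⟩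

theorem Module.Basis.lie_eq_sum_repr_smul_lie {R L ι : Type*} [CommRing R] [LieRing L]
    [LieAlgebra R L] [Fintype ι] (B : Module.Basis ι R L) (Y X : L) :
    ⁅Y, X⁆ = ∑ j, B.repr X j • ⁅Y, B j⁆ := by
  conv_lhs => rw [← B.sum_repr X]
  simp only [lie_sum, lie_smul]

def hCoadCoords (a b : ℝ) (x : Fin 8 → ℝ) : Fin 8 → ℝ :=
  ![a * x 4 + b * x 5, a * x 2 + b * x 3, -(a * x 1), -(b * x 1), -(a * x 0), -(b * x 0), 0, 0]

def hQuadric : Set (Fin 8 → ℝ) :=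
  {t | t 6 = 0 ∧ t 7 = 0 ∧ t 2 * t 5 = t 3 * t 4}

theorem coords_coad_eq_hCoadCoords {H : Type*} [LieRing H] [LieAlgebra ℝ H]
    (B : Module.Basis (Fin 8) ℝ H) (hbr : ∀ i j : Fin 8, ⁅B i, B j⁆ = hBr (fun k => B k) i j)
    (X : H) (ℓ : Module.Dual ℝ H) :
    coords B (coad X ℓ) = hCoadCoords (ℓ (B 6)) (ℓ (B 7)) (B.repr X) := by
  funext i
  change ℓ ⁅B i, X⁆ = _
  rw [B.lie_eq_sum_repr_smul_lie]
  fin_cases i <;> simp [Fin.sum_univ_eight, hbr, hBr, hCoadCoords] <;> ring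

theorem hCoadCoords_mem_hQuadric (a b : ℝ) (x : Fin 8 → ℝ) : hCoadCoords a b x ∈ hQuadric := by
  refine ⟨rfl, rfl, ?_⟩
  change -(a * x 1) * -(b * x 0) = -(b * x 1) * -(a * x 0)
  ring

theorem exists_hCoadCoords_eq {t : Fin 8 → ℝ} (ht : t ∈ hQuadric) :
    ∃ a b x, hCoadCoords a b x = t := by
  obtain ⟨h6, h7, h⟩ := ht
  obtain ⟨a, b, u, v, hab, h2, h3, h4, h5⟩ := Real.exists_rank_one_of_mul_eq_mul h
  obtain ⟨x4, x5, h0⟩ := exists_mul_add_mul_eq hab (t 0)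
  obtain ⟨x2, x3, h1⟩ := exists_mul_add_mul_eq hab (t 1)
  refine ⟨a, b, ![-v, -u, x2, x3, x4, x5, 0, 0], ?_⟩
  funext i
  fin_cases i <;> simp [hCoadCoords, *] <;> ring

theorem isClosed_hQuadric : IsClosed hQuadric :=
  (isClosed_eq (continuous_apply 6) continuous_const).inter <|
    (isClosed_eq (continuous_apply 7) continuous_const).inter <|
      isClosed_eq ((continuous_apply 2).mul (continuous_apply 5))
        ((continuous_apply 3).mul (continuous_apply 4))

theorem image_coords_adStar {H : Type*} [LieRing H] [LieAlgebra ℝ H]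
    (B : Module.Basis (Fin 8) ℝ H) (hbr : ∀ i j : Fin 8, ⁅B i, B j⁆ = hBr (fun k => B k) i j) :
    coords B '' adStar H = hQuadric := by
  ext t
  constructor
  · rintro ⟨_, ⟨X, ℓ, rfl⟩, rfl⟩
    rw [coords_coad_eq_hCoadCoords B hbr]
    exact hCoadCoords_mem_hQuadric _ _ _
  · intro ht
    obtain ⟨a, b, x, rfl⟩ := exists_hCoadCoords_eq ht
    refine ⟨_, ⟨B.equivFun.symm x, a • B.coord 6 + b • B.coord 7, rfl⟩, ?_⟩
    have hx : ⇑(B.repr (B.equivFun.symm x)) = x := B.equivFun.apply_symm_apply x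
    rw [coords_coad_eq_hCoadCoords B hbr, hx]
    simp

/-- For the 8-dimensional two-step nilpotent Lie algebra `𝔥` with basis
`(X_1,…,X_6,Z_1,Z_2)` (indices `0,…,5` for the `X`'s, `6,7` for the `Z`'s) and nontrivial
brackets `⁅X_1,X_5⁆ = ⁅X_2,X_3⁆ = Z_1`, `⁅X_1,X_6⁆ = ⁅X_2,X_4⁆ = Z_2`, the cortex of `𝔥*`
is `{f : f(Z_1) = f(Z_2) = 0 and f(X_3)f(X_6) = f(X_4)f(X_5)}`. -/
theorem cortex_h8 (H : Type) [LieRing H] [LieAlgebra ℝ H]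
    (B : Module.Basis (Fin 8) ℝ H)
    (hbr : ∀ i j : Fin 8, ⁅B i, B j⁆ = hBr (fun k => B k) i j) :
    corSet B
      = {f : Module.Dual ℝ H | f (B 6) = 0 ∧ f (B 7) = 0 ∧
          f (B 2) * f (B 5) = f (B 3) * f (B 4)} := by
  rw [corSet, image_coords_adStar B hbr, isClosed_hQuadric.closure_eq]
  rfl
end

section
/- Let 𝔥 be the 8-dimensional real two-step nilpotent Lie algebra with basis (X_1,…,X_6, Z_1, Z_2) and nontrivial brackets [X_1,X_5] = [X_2,X_3] = Z_1 and [X_1,X_6] = [X_2,X_4] = Z_2. A polynomial function P on 𝔥* is Ad*(G)-invariant (equivalently, P(f + ad*_X f) = P(f) for all X ∈ 𝔥 and f ∈ 𝔥*) if and only if P belongs to the ℝ-subalgebra generated by the four polynomials z_1, z_2, z_1 x_4 − z_2 x_3, and z_1 x_6 − z_2 x_5, where z_i(f) = f(Z_i) and x_k(f) = f(X_k) are the coordinate functions with respect to the dual basis. -/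
/-! On the open set `z₁ ≠ 0` every coadjoint orbit meets the slice `x₁ = x₂ = x₃ = x₅ = 0`,
at the point with `x₄ = (z₁x₄ - z₂x₃)/z₁` and `x₆ = (z₁x₆ - z₂x₅)/z₁`. Evaluating an invariant
`P` there and clearing denominators gives `z₁ᴺ P = W(z₁, z₂, z₁x₄ - z₂x₃, z₁x₆ - z₂x₅)` for a
polynomial `W`. At `z₁ = 0` the right-hand side is `W(0, z₂, -z₂x₃, -z₂x₅)`, and these arguments
cover every `(0, y, p, q)` with `y ≠ 0`, so the first variable divides `W` and the exponent `N`
descends to `0`. Conversely, `ad*_X` moves `(x₃, x₄)` and `(x₅, x₆)` by multiples of `(z₁, z₂)`,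
which leaves the four generators fixed. -/

namespace MvPolynomial

variable {σ τ K : Type*} [Field K]

theorem eval_aeval (d : τ → K) (g : σ → MvPolynomial τ K) (p : MvPolynomial σ K) :
    eval d (aeval g p) = eval (fun j => eval d (g j)) p := by
  induction p using MvPolynomial.induction_on <;> simp_all

theorem eq_of_eval_eq_of_ne_zero [Infinite K] (i : σ) {p q : MvPolynomial σ K}
    (h : ∀ d : σ → K, d i ≠ 0 → eval d p = eval d q) : p = q := by
  refine mul_left_cancel₀ (X_ne_zero i) (MvPolynomial.funext fun d => ?_)
  by_cases hd : d i = 0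
  · simp [hd]
  · simp [h d hd]

theorem X_dvd_sub_aeval_update {R : Type*} [CommRing R] [DecidableEq σ] (i : σ)
    (p : MvPolynomial σ R) :
    X i ∣ p - aeval (Function.update (X : σ → MvPolynomial σ R) i 0) p := by
  induction p using MvPolynomial.induction_on with
  | C a => simp
  | add p q hp hq =>
    rw [map_add, add_sub_add_comm]
    exact dvd_add hp hq
  | mul_X p j hp =>
    have hj : X i ∣ X j - Function.update (X : σ → MvPolynomial σ R) i 0 j := by
      by_cases hji : j = i
      · subst hji; simp
      · simp [Function.update_of_ne hji]
    calc X i ∣ (p - aeval (Function.update X i 0) p) * X j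
          + aeval (Function.update X i 0) p * (X j - Function.update X i 0 j) :=
          dvd_add (dvd_mul_of_dvd_left hp _) (dvd_mul_of_dvd_right hj _)
      _ = p * X j - aeval (Function.update X i 0) (p * X j) := by
          rw [map_mul, aeval_X]; ring

theorem X_dvd_of_eval_eq_zero [Infinite K] [DecidableEq σ] {i j : σ} (hij : i ≠ j)
    {p : MvPolynomial σ K} (h : ∀ d : σ → K, d i = 0 → d j ≠ 0 → eval d p = 0) : X i ∣ p := by
  have hres : aeval (Function.update (X : σ → MvPolynomial σ K) i 0) p = 0 := by
    refine eq_of_eval_eq_of_ne_zero j fun d hd => ?_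
    have hpt : (fun k => eval d (Function.update (X : σ → MvPolynomial σ K) i 0 k)) =
        Function.update d i 0 := by
      funext k
      by_cases hki : k = i
      · subst hki; simp
      · simp [Function.update_of_ne hki]
    rw [eval_aeval, hpt, map_zero]
    exact h _ (by simp) (by simpa [Function.update_of_ne hij.symm])
  simpa only [hres, sub_zero] using X_dvd_sub_aeval_update i p

theorem exists_eval_eq_pow_mul_eval_div (P : MvPolynomial σ K) (num : σ → MvPolynomial τ K)
    (den : MvPolynomial τ K) :
    ∃ (N : ℕ) (Q : MvPolynomial τ K), ∀ d : τ → K, eval d den ≠ 0 →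
      eval d Q = eval d den ^ N * eval (fun j => eval d (num j) / eval d den) P := by
  induction P using MvPolynomial.induction_on with
  | C a => exact ⟨0, C a, fun d _ => by simp⟩
  | add p q hp hq =>
    obtain ⟨M, Qp, hQp⟩ := hp
    obtain ⟨N, Qq, hQq⟩ := hq
    refine ⟨M + N, den ^ N * Qp + den ^ M * Qq, fun d hd => ?_⟩
    simp only [map_add, map_mul, map_pow, hQp d hd, hQq d hd]
    ring
  | mul_X p j hp =>
    obtain ⟨N, Q, hQ⟩ := hp
    refine ⟨N + 1, Q * num j, fun d hd => ?_⟩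
    simp only [map_mul, eval_X, hQ d hd]
    field_simp
    ring

end MvPolynomial

noncomputable section

namespace H8

open MvPolynomial

def coadMove (a c : Fin 8 → ℝ) : Fin 8 → ℝ :=
  ![c 0 + a 4 * c 6 + a 5 * c 7, c 1 + a 2 * c 6 + a 3 * c 7,
    c 2 - a 1 * c 6, c 3 - a 1 * c 7, c 4 - a 0 * c 6, c 5 - a 0 * c 7, c 6, c 7]

section Coadjoint

variable {H : Type} [LieRing H] [LieAlgebra ℝ H] {B : Module.Basis (Fin 8) ℝ H}

theorem coords_add_coad (hbr : ∀ i j : Fin 8, ⁅B i, B j⁆ = hBr (fun k => B k) i j)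
    (a : Fin 8 → ℝ) (f : Module.Dual ℝ H) :
    coords B (f + coad (∑ j, a j • B j) f) = coadMove a (coords B f) := by
  funext i
  have hlie : ⁅B i, ∑ j, a j • B j⁆ = ∑ j, a j • hBr (fun k => B k) i j := by
    simp only [lie_sum, lie_smul, hbr]
  change f (B i) + f ⁅B i, ∑ j, a j • B j⁆ = _
  rw [hlie, map_sum]
  simp only [map_smul, smul_eq_mul]
  fin_cases i <;> simp [hBr, Fin.sum_univ_eight, coadMove, coords] <;> ring

theorem coad_invariant_iff (hbr : ∀ i j : Fin 8, ⁅B i, B j⁆ = hBr (fun k => B k) i j)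
    (P : MvPolynomial (Fin 8) ℝ) :
    (∀ (X : H) (f : Module.Dual ℝ H), eval (coords B (f + coad X f)) P = eval (coords B f) P) ↔
      ∀ a c : Fin 8 → ℝ, eval (coadMove a c) P = eval c P := by
  constructor
  · intro hP a c
    have hc : coords B (B.constr ℝ c) = c := funext (B.constr_basis ℝ c)
    simpa only [coords_add_coad hbr, hc] using hP (∑ j, a j • B j) (B.constr ℝ c)
  · intro hP X f
    rw [← B.sum_repr X, coords_add_coad hbr]
    exact hP _ _

end Coadjoint

def gens : Fin 4 → MvPolynomial (Fin 8) ℝ :=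
  ![X 6, X 7, X 6 * X 3 - X 7 * X 2, X 6 * X 5 - X 7 * X 4]

theorem adjoin_eq_range_aeval_gens :
    Algebra.adjoin ℝ ({X 6, X 7, X 6 * X 3 - X 7 * X 2, X 6 * X 5 - X 7 * X 4} :
      Set (MvPolynomial (Fin 8) ℝ)) = (aeval gens).range := by
  rw [← Algebra.adjoin_range_eq_range_aeval]
  congr 1
  ext x
  simp [gens]
  tauto

theorem eval_coadMove_gens (a c : Fin 8 → ℝ) (i : Fin 4) :
    eval (coadMove a c) (gens i) = eval c (gens i) := by
  fin_cases i <;> simp [gens, coadMove] <;> ring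

theorem eval_coadMove_aeval_gens (W : MvPolynomial (Fin 4) ℝ) (a c : Fin 8 → ℝ) :
    eval (coadMove a c) (aeval gens W) = eval c (aeval gens W) := by
  simp only [eval_aeval, eval_coadMove_gens]

/-- The point of the slice `x₁ = x₂ = x₃ = x₅ = 0` where the generators take the values `d`. -/
def slicePoint (d : Fin 4 → ℝ) : Fin 8 → ℝ :=
  ![0, 0, 0, d 2 / d 0, 0, d 3 / d 0, d 0, d 1]

theorem eval_eq_eval_slicePoint {P : MvPolynomial (Fin 8) ℝ}
    (hP : ∀ a c : Fin 8 → ℝ, eval (coadMove a c) P = eval c P) {c : Fin 8 → ℝ} (hc : c 6 ≠ 0) :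
    eval c P = eval (slicePoint fun i => eval c (gens i)) P := by
  have hmove : coadMove ![c 4 / c 6, c 2 / c 6, -(c 1 / c 6), 0, -(c 0 / c 6), 0, 0, 0] c =
      slicePoint fun i => eval c (gens i) := by
    funext i
    fin_cases i <;> simp [coadMove, slicePoint, gens] <;> field_simp <;> ring
  rw [← hmove, hP]

theorem exists_X_pow_mul_eq_aeval_gens {P : MvPolynomial (Fin 8) ℝ}
    (hP : ∀ a c : Fin 8 → ℝ, eval (coadMove a c) P = eval c P) :
    ∃ (N : ℕ) (W : MvPolynomial (Fin 4) ℝ), X 6 ^ N * P = aeval gens W := by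
  set num : Fin 8 → MvPolynomial (Fin 4) ℝ := ![0, 0, 0, X 2, 0, X 3, X 0 ^ 2, X 0 * X 1] with hnum
  obtain ⟨N, W, hW⟩ := exists_eval_eq_pow_mul_eval_div P num (X 0)
  refine ⟨N, W, eq_of_eval_eq_of_ne_zero 6 fun c hc => ?_⟩
  have h0 : eval (fun i => eval c (gens i)) (X 0) = c 6 := by simp [gens]
  have hslice : (fun j => eval (fun i => eval c (gens i)) (num j) / c 6) =
      slicePoint fun i => eval c (gens i) := by
    funext j
    fin_cases j <;> simp [hnum, slicePoint, gens] <;> field_simp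
  rw [eval_aeval, hW _ (h0 ▸ hc), h0, hslice, ← eval_eq_eval_slicePoint hP hc, map_mul, map_pow,
    eval_X]

theorem X_zero_dvd_of_X_pow_succ_mul_eq {P : MvPolynomial (Fin 8) ℝ} {n : ℕ}
    {W : MvPolynomial (Fin 4) ℝ} (h : X 6 ^ (n + 1) * P = aeval gens W) : X 0 ∣ W := by
  refine X_dvd_of_eval_eq_zero (j := 1) (by decide) fun d hd0 hd1 => ?_
  have hgens :
      (fun i => eval ![0, 0, -(d 2 / d 1), 0, -(d 3 / d 1), 0, 0, d 1] (gens i)) = d := by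
    funext i
    fin_cases i <;> simp [gens, hd0] <;> field_simp
  rw [← hgens, ← eval_aeval, ← h]
  simp

theorem mem_range_aeval_gens_of_X_pow_mul_eq {P : MvPolynomial (Fin 8) ℝ} {n : ℕ}
    {W : MvPolynomial (Fin 4) ℝ} (h : X 6 ^ n * P = aeval gens W) :
    P ∈ (aeval (R := ℝ) gens).range := by
  induction n generalizing W with
  | zero => exact ⟨W, by simpa using h.symm⟩
  | succ n ih =>
    obtain ⟨W', rfl⟩ := X_zero_dvd_of_X_pow_succ_mul_eq h
    refine ih (W := W') (mul_left_cancel₀ (X_ne_zero 6) ?_)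
    rw [← mul_assoc, ← pow_succ', h, map_mul, aeval_X]
    rfl

end H8

end

/-- For the 8-dimensional Lie algebra `𝔥` as above, a polynomial function `P`
on `𝔥*` (in the dual-basis coordinates) is `Ad*(G)`-invariant, i.e.
`P(f + ad*_X f) = P(f)` for all `X ∈ 𝔥`, `f ∈ 𝔥*`, if and only if `P` lies in the
`ℝ`-subalgebra generated by `z_1, z_2, z_1x_4 − z_2x_3, z_1x_6 − z_2x_5`
(variables `6,7` are `z_1,z_2` and variables `0,…,5` are `x_1,…,x_6`). -/
theorem invariant_polynomials_h8 (H : Type) [LieRing H] [LieAlgebra ℝ H]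
    (B : Module.Basis (Fin 8) ℝ H)
    (hbr : ∀ i j : Fin 8, ⁅B i, B j⁆ = hBr (fun k => B k) i j)
    (P : MvPolynomial (Fin 8) ℝ) :
    (∀ (X : H) (f : Module.Dual ℝ H),
        MvPolynomial.eval (coords B (f + coad X f)) P = MvPolynomial.eval (coords B f) P)
      ↔ P ∈ Algebra.adjoin ℝ
          ({MvPolynomial.X 6, MvPolynomial.X 7,
            MvPolynomial.X 6 * MvPolynomial.X 3 - MvPolynomial.X 7 * MvPolynomial.X 2,
            MvPolynomial.X 6 * MvPolynomial.X 5 - MvPolynomial.X 7 * MvPolynomial.X 4} :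
            Set (MvPolynomial (Fin 8) ℝ)) := by
  rw [H8.coad_invariant_iff hbr, H8.adjoin_eq_range_aeval_gens]
  constructor
  · intro hP
    obtain ⟨N, W, hW⟩ := H8.exists_X_pow_mul_eq_aeval_gens hP
    exact H8.mem_range_aeval_gens_of_X_pow_mul_eq hW
  · rintro ⟨W, rfl⟩
    exact H8.eval_coadMove_aeval_gens W
end

section
/- Let 𝔥 be the 8-dimensional real two-step nilpotent Lie algebra with basis (X_1,…,X_6, Z_1, Z_2) and nontrivial brackets [X_1,X_5] = [X_2,X_3] = Z_1 and [X_1,X_6] = [X_2,X_4] = Z_2. Then ICor(𝔥*) = 𝔷^⊥ = {f ∈ 𝔥* : f(Z_1) = f(Z_2) = 0}, and Cor(𝔥*) is strictly contained in ICor(𝔥*): there exists f ∈ 𝔷^⊥ with f(X_3)f(X_6) ≠ f(X_4)f(X_5), hence f ∉ Cor(𝔥*). -/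
/-- The coadjoint action of `𝔥` in coordinates: `coadCoords x a` lists the values on the basis
of `ad*_X ℓ`, where `x` and `a` are the coordinates of `X` and `ℓ`. -/
def coadCoords (x a : Fin 8 → ℝ) : Fin 8 → ℝ :=
  ![x 4 * a 6 + x 5 * a 7, x 2 * a 6 + x 3 * a 7, -(x 1 * a 6), -(x 1 * a 7),
    -(x 0 * a 6), -(x 0 * a 7), 0, 0]

def CoadInvariant (q : (Fin 8 → ℝ) → ℝ) : Prop :=
  ∀ x a, q (a + coadCoords x a) = q a

lemma eq_at_zero_of_forall_ne_zero {α : Type*} [TopologicalSpace α] [T2Space α] {f g : ℝ → α}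
    (hf : Continuous f) (hg : Continuous g) (h : ∀ t ≠ 0, f t = g t) : f 0 = g 0 :=
  congrFun (hf.ext_on (dense_compl_singleton 0) hg h) 0

namespace CoadInvariant

variable {q : (Fin 8 → ℝ) → ℝ}

/-- Invariance only relates points of one orbit; continuity carries the relation to `t = 0`,
where `γ 0` and `δ 0` may lie in different orbits. -/
lemma apply_zero_eq (hq : CoadInvariant q) (hc : Continuous q) {γ δ : ℝ → Fin 8 → ℝ}
    (hγ : Continuous γ) (hδ : Continuous δ)
    (h : ∀ t ≠ 0, ∃ x, γ t + coadCoords x (γ t) = δ t) : q (γ 0) = q (δ 0) := by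
  refine eq_at_zero_of_forall_ne_zero (hc.comp hγ) (hc.comp hδ) fun t ht => ?_
  obtain ⟨x, hx⟩ := h t ht
  simp only [Function.comp_apply, ← hx, hq x]

lemma apply_eq_apply_zero (hq : CoadInvariant q) (hc : Continuous q) {a : Fin 8 → ℝ}
    (h6 : a 6 = 0) (h7 : a 7 = 0) : q a = q 0 := by
  have hZ₁ : q ![a 0, a 1, a 2, a 3, a 4, a 5, 0, 0] = q ![0, 0, 0, a 3, 0, a 5, 0, 0] := by
    refine hq.apply_zero_eq hc (γ := fun t => ![a 0, a 1, a 2, a 3, a 4, a 5, t, 0])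
      (δ := fun t => ![0, 0, 0, a 3, 0, a 5, t, 0]) (by fun_prop) (by fun_prop) fun t ht => ?_
    refine ⟨![a 4 / t, a 2 / t, -a 1 / t, 0, -a 0 / t, 0, 0, 0], ?_⟩
    ext j; fin_cases j <;> simp [coadCoords] <;> field_simp <;> ring
  have hZ₂ : q ![0, 0, 0, a 3, 0, a 5, 0, 0] = q 0 := by
    have := hq.apply_zero_eq hc (γ := fun s => ![0, 0, 0, a 3, 0, a 5, 0, s])
      (δ := fun s => ![0, 0, 0, 0, 0, 0, 0, s]) (by fun_prop) (by fun_prop) fun s hs => by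
        refine ⟨![a 5 / s, a 3 / s, 0, 0, 0, 0, 0, 0], ?_⟩
        ext j; fin_cases j <;> simp [coadCoords] <;> field_simp <;> ring
    exact this.trans (congrArg q (by ext j; fin_cases j <;> rfl))
  have ha : a = ![a 0, a 1, a 2, a 3, a 4, a 5, 0, 0] := by
    ext j; fin_cases j <;> simp [h6, h7]
  rw [ha, hZ₁, hZ₂]

end CoadInvariant

section coordinates

variable {H : Type*} [LieRing H] [LieAlgebra ℝ H] {B : Module.Basis (Fin 8) ℝ H}

lemma coords_constr (a : Fin 8 → ℝ) : coords B (B.constr ℝ a) = a :=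
  funext (B.constr_basis ℝ a)

variable (hbr : ∀ i j : Fin 8, ⁅B i, B j⁆ = hBr (fun k => B k) i j)
include hbr

lemma coords_coad (X : H) (ℓ : Module.Dual ℝ H) :
    coords B (coad X ℓ) = coadCoords (B.equivFun X) (coords B ℓ) := by
  obtain ⟨x, rfl⟩ := B.equivFun.symm.surjective X
  funext j
  change ℓ ⁅B j, B.equivFun.symm x⁆ = _
  simp only [B.equivFun_symm_apply, lie_sum, lie_smul, map_sum, map_smul, hbr, smul_eq_mul]
  fin_cases j <;> simp [Fin.sum_univ_eight, hBr, coadCoords, coords]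

lemma coords_add_coad (X : H) (ℓ : Module.Dual ℝ H) :
    coords B (ℓ + coad X ℓ) = coords B ℓ + coadCoords (B.equivFun X) (coords B ℓ) := by
  rw [← coords_coad hbr]
  rfl

lemma forall_coad_invariant_iff (q : (Fin 8 → ℝ) → ℝ) :
    (∀ (X : H) (ℓ : Module.Dual ℝ H), q (coords B (ℓ + coad X ℓ)) = q (coords B ℓ)) ↔
      CoadInvariant q := by
  refine ⟨fun h x a => ?_, fun h X ℓ => ?_⟩
  · simpa only [coords_add_coad hbr, coords_constr, LinearEquiv.apply_symm_apply] using
      h (B.equivFun.symm x) (B.constr ℝ a)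
  · rw [coords_add_coad hbr, h]

lemma apply_eq_of_mem_corSet {f : Module.Dual ℝ H} (hf : f ∈ corSet B) :
    f (B 6) = 0 ∧ f (B 7) = 0 ∧ f (B 2) * f (B 5) = f (B 3) * f (B 4) := by
  let S : Set (Fin 8 → ℝ) := {v | v 6 = 0 ∧ v 7 = 0 ∧ v 2 * v 5 = v 3 * v 4}
  have hS : IsClosed S := by
    refine (isClosed_eq ?_ ?_).inter ((isClosed_eq ?_ ?_).inter (isClosed_eq ?_ ?_)) <;> fun_prop
  have himage : coords B '' adStar H ⊆ S := by
    rintro _ ⟨_, ⟨X, ℓ, rfl⟩, rfl⟩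
    simp [S, coords_coad hbr, coadCoords]
    ring
  exact closure_minimal himage hS hf

end coordinates

/-- For the 8-dimensional Lie algebra `𝔥` as above:
`ICor(𝔥*)` (the set of `f` with `P(f) = P(0)` for every `Ad*(G)`-invariant polynomial `P`)
equals `𝔷^⊥ = {f : f(Z_1) = f(Z_2) = 0}`, and `Cor(𝔥*)` is strictly contained in it:
`Cor(𝔥*) ⊆ 𝔷^⊥` and there is `f ∈ 𝔷^⊥` with `f(X_3)f(X_6) ≠ f(X_4)f(X_5)`,
which does not belong to `Cor(𝔥*)`. -/
theorem icor_h8 (H : Type) [LieRing H] [LieAlgebra ℝ H]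
    (B : Module.Basis (Fin 8) ℝ H)
    (hbr : ∀ i j : Fin 8, ⁅B i, B j⁆ = hBr (fun k => B k) i j) :
    ({f : Module.Dual ℝ H | ∀ P : MvPolynomial (Fin 8) ℝ,
        (∀ (X : H) (ℓ : Module.Dual ℝ H),
          MvPolynomial.eval (coords B (ℓ + coad X ℓ)) P = MvPolynomial.eval (coords B ℓ) P) →
        MvPolynomial.eval (coords B f) P = MvPolynomial.eval (fun _ : Fin 8 => (0 : ℝ)) P}
      = {f : Module.Dual ℝ H | f (B 6) = 0 ∧ f (B 7) = 0})
    ∧ corSet B ⊆ {f : Module.Dual ℝ H | f (B 6) = 0 ∧ f (B 7) = 0}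
    ∧ ∃ f : Module.Dual ℝ H, f (B 6) = 0 ∧ f (B 7) = 0 ∧
        f (B 2) * f (B 5) ≠ f (B 3) * f (B 4) ∧ f ∉ corSet B := by
  have hcentral (k : Fin 8) (hk : k = 6 ∨ k = 7) (X : H) (ℓ : Module.Dual ℝ H) :
      MvPolynomial.eval (coords B (ℓ + coad X ℓ)) (MvPolynomial.X k) =
        MvPolynomial.eval (coords B ℓ) (MvPolynomial.X k) := by
    simp only [coords_add_coad hbr, MvPolynomial.eval_X, Pi.add_apply, add_eq_left]
    rcases hk with rfl | rfl <;> rfl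
  set v : Fin 8 → ℝ := ![0, 0, 1, 0, 0, 1, 0, 0]
  have hv (i : Fin 8) : B.constr ℝ v (B i) = v i := B.constr_basis ℝ v i
  refine ⟨?_, fun f hf => ⟨(apply_eq_of_mem_corSet hbr hf).1, (apply_eq_of_mem_corSet hbr hf).2.1⟩,
    ⟨B.constr ℝ v, by simp [hv, v], by simp [hv, v], by simp [hv, v], fun hmem => ?_⟩⟩
  · ext f
    refine ⟨fun hf => ⟨?_, ?_⟩, fun ⟨h6, h7⟩ P hP => ?_⟩
    · simpa [coords] using hf _ (hcentral 6 (.inl rfl))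
    · simpa [coords] using hf _ (hcentral 7 (.inr rfl))
    · exact ((forall_coad_invariant_iff hbr (MvPolynomial.eval · P)).1 hP).apply_eq_apply_zero
        (MvPolynomial.continuous_eval P) h6 h7
  · simpa [hv, v] using (apply_eq_of_mem_corSet hbr hmem).2.2
end

section
/- For every integer d ≥ 2 and every ℓ ∈ 𝔤_d* with ℓ(Z_1) ≠ 0, the map from ℝ^{2d} to 𝔤_d* sending (t_1,…,t_d, s_1,…,s_d) to ℓ + ad*_{t_1 Y_1 + t_2 Y_3 + ⋯ + t_d Y_{2d−1} + s_1 X_1 + ⋯ + s_d X_d} ℓ is a bijection from ℝ^{2d} onto the coadjoint orbit {ℓ + ad*_X ℓ : X ∈ 𝔤_d} of ℓ. -/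
/-- Index type for the basis of `𝔤_d`: first component indexes `Z_1,…,Z_d`, the second
the odd `Y`'s `Y_1, Y_3, …, Y_{2d-1}`, the third the even `Y`'s `Y_2, Y_4, …, Y_{2d}`,
and the fourth `X_1,…,X_d`. -/
abbrev Idx (d : ℕ) : Type := Fin d ⊕ (Fin d ⊕ (Fin d ⊕ Fin d))

/-- Index of `Z_{i+1}`. -/
def zI {d : ℕ} (i : Fin d) : Idx d := Sum.inl i
/-- Index of `Y_{2i+1}` (odd-indexed `Y`). -/
def yoI {d : ℕ} (i : Fin d) : Idx d := Sum.inr (Sum.inl i)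
/-- Index of `Y_{2i+2}` (even-indexed `Y`). -/
def yeI {d : ℕ} (i : Fin d) : Idx d := Sum.inr (Sum.inr (Sum.inl i))
/-- Index of `X_{i+1}`. -/
def xI {d : ℕ} (i : Fin d) : Idx d := Sum.inr (Sum.inr (Sum.inr i))

/-- Value of `⁅X_{i+1}, Y_{2i+2}⁆`: `Z_{i+2}` if `i + 1 < d`, and `Z_2 + ⋯ + Z_d`
if `i + 1 = d`. -/
def gdW {d : ℕ} (hd : 2 ≤ d) {V : Type*} [AddCommGroup V] (B : Idx d → V) (i : Fin d) : V :=
  if h : (i : ℕ) < d - 1 then B (zI ⟨(i : ℕ) + 1, by omega⟩)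
  else ∑ m ∈ Finset.univ.filter (fun m : Fin d => 0 < (m : ℕ)), B (zI m)

/-- The bracket `⁅B a, B b⁆` of two basis vectors of `𝔤_d`, given by the structure
constants: `⁅X_i, Y_{2i-1}⁆ = Z_1` for `i = 1,…,d`, `⁅X_k, Y_{2k}⁆ = Z_{k+1}` for
`k = 1,…,d-1`, `⁅X_d, Y_{2d}⁆ = Z_2 + ⋯ + Z_d`, all other brackets of basis
vectors being zero (up to antisymmetry). -/
def gdBr {d : ℕ} (hd : 2 ≤ d) {V : Type*} [AddCommGroup V] (B : Idx d → V) :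
    Idx d → Idx d → V
  | Sum.inr (Sum.inr (Sum.inr i)), Sum.inr (Sum.inl j) =>
      if i = j then B (zI ⟨0, by omega⟩) else 0
  | Sum.inr (Sum.inl j), Sum.inr (Sum.inr (Sum.inr i)) =>
      if i = j then -(B (zI ⟨0, by omega⟩)) else 0
  | Sum.inr (Sum.inr (Sum.inr i)), Sum.inr (Sum.inr (Sum.inl j)) =>
      if i = j then gdW hd B i else 0
  | Sum.inr (Sum.inr (Sum.inl j)), Sum.inr (Sum.inr (Sum.inr i)) =>
      if i = j then -(gdW hd B i) else 0
  | _, _ => 0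

/-- The homogeneous polynomial `Q_d` of degree `d`, evaluated at the odd coordinates
`ηo` (`ηo i = η_{2i+1}`) and the even coordinates `ηe` (`ηe i = η_{2i+2}`):
`Q_d = η_{2d-1}·Σ_{i=1}^{d-1}(η_{2i}·∏_{j=1, j≠i}^{d-1} η_{2j-1})
      − η_{2d}·∏_{j=1}^{d-1} η_{2j-1}`. -/
def Qd (d : ℕ) (hd : 2 ≤ d) (ηo ηe : Fin d → ℝ) : ℝ :=
  ηo ⟨d - 1, by omega⟩ *
      (∑ i ∈ Finset.univ.filter (fun i : Fin d => (i : ℕ) < d - 1),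
        ηe i * ∏ j ∈ Finset.univ.filter (fun j : Fin d => (j : ℕ) < d - 1 ∧ j ≠ i), ηo j)
    - ηe ⟨d - 1, by omega⟩ *
        ∏ j ∈ Finset.univ.filter (fun j : Fin d => (j : ℕ) < d - 1), ηo j

/-! The map `X ↦ ad*_X ℓ` is linear, and its kernel contains the centre and the vectors
`ℓ(Z_1) Y_{2i} - ℓ([X_i, Y_{2i}]) Y_{2i-1}`. These span a complement of
`V = span(Y_1, Y_3, …, Y_{2d-1}, X_1, …, X_d)`, so `ad*_V ℓ = ad*_𝔤 ℓ`; and the map is injective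
on `V`, since `ad*_{Σ t_i Y_{2i-1} + Σ s_i X_i} ℓ` takes the value `t_i ℓ(Z_1)` at `X_i` and
`-s_i ℓ(Z_1)` at `Y_{2i-1}`. -/

theorem Set.bijOn_const_add_univ_of_range_eq {α β M : Type*} [Add M] [IsLeftCancelAdd M] (c : M)
    {f : α → M} {h : β → M} (hf : Function.Injective f) (hfh : Set.range f = Set.range h) :
    Set.BijOn (fun a => c + f a) Set.univ {g | ∃ b, g = c + h b} := by
  refine ⟨fun a _ => ?_, fun a _ a' _ haa' => hf (add_left_cancel haa'), ?_⟩
  · obtain ⟨b, hb⟩ : f a ∈ Set.range h := hfh ▸ Set.mem_range_self a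
    exact ⟨b, congrArg (c + ·) hb.symm⟩
  · rintro _ ⟨b, rfl⟩
    obtain ⟨a, ha⟩ : h b ∈ Set.range f := hfh ▸ Set.mem_range_self b
    exact ⟨a, trivial, congrArg (c + ·) ha⟩

section Coad

variable {L : Type*} [LieRing L] [LieAlgebra ℝ L]

@[simp] theorem coad_apply (X : L) (ℓ : Module.Dual ℝ L) (W : L) : coad X ℓ W = ℓ ⁅W, X⁆ :=
  rfl

def coadLinearMap (ℓ : Module.Dual ℝ L) : L →ₗ[ℝ] Module.Dual ℝ L where
  toFun X := coad X ℓ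
  map_add' X Y := by ext W; simp [lie_add]
  map_smul' c X := by ext W; simp [lie_smul]

@[simp] theorem coadLinearMap_apply (ℓ : Module.Dual ℝ L) (X : L) :
    coadLinearMap ℓ X = coad X ℓ :=
  rfl

end Coad

section GdBr

variable {d : ℕ} (hd : 2 ≤ d) {V : Type*} [AddCommGroup V] (B : Idx d → V)

@[simp] theorem gdBr_xI_yoI (i j : Fin d) :
    gdBr hd B (xI i) (yoI j) = if i = j then B (zI ⟨0, by omega⟩) else 0 :=
  rfl

@[simp] theorem gdBr_yoI_xI (i j : Fin d) :
    gdBr hd B (yoI j) (xI i) = if i = j then -B (zI ⟨0, by omega⟩) else 0 :=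
  rfl

@[simp] theorem gdBr_xI_yeI (i j : Fin d) :
    gdBr hd B (xI i) (yeI j) = if i = j then gdW hd B i else 0 :=
  rfl

@[simp] theorem gdBr_xI_xI (i j : Fin d) : gdBr hd B (xI i) (xI j) = 0 := rfl

@[simp] theorem gdBr_yoI_yoI (i j : Fin d) : gdBr hd B (yoI i) (yoI j) = 0 := rfl

@[simp] theorem gdBr_yoI_yeI (i j : Fin d) : gdBr hd B (yoI i) (yeI j) = 0 := rfl

@[simp] theorem gdBr_yeI_yoI (i j : Fin d) : gdBr hd B (yeI i) (yoI j) = 0 := rfl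

@[simp] theorem gdBr_yeI_yeI (i j : Fin d) : gdBr hd B (yeI i) (yeI j) = 0 := rfl

@[simp] theorem gdBr_zI_left (j : Fin d) (b : Idx d) : gdBr hd B (zI j) b = 0 := rfl

@[simp] theorem gdBr_zI_right (a : Idx d) (j : Fin d) : gdBr hd B a (zI j) = 0 := by
  rcases a with _ | _ | _ | _ <;> rfl

end GdBr

theorem Idx.sum_univ {d : ℕ} {M : Type*} [AddCommMonoid M] (f : Idx d → M) :
    ∑ a, f a = ∑ j, f (zI j) + ∑ i, f (yoI i) + ∑ i, f (yeI i) + ∑ k, f (xI k) := by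
  simp only [Fintype.sum_sum_type, add_assoc]
  rfl

theorem Idx.forall {d : ℕ} {P : Idx d → Prop} :
    (∀ a, P a) ↔ (∀ j, P (zI j)) ∧ (∀ i, P (yoI i)) ∧ (∀ i, P (yeI i)) ∧ ∀ k, P (xI k) := by
  simp only [Sum.forall]
  rfl

noncomputable def oddYXComb {d : ℕ} {L : Type*} [AddCommGroup L] [Module ℝ L]
    (B : Module.Basis (Idx d) ℝ L) (ts : (Fin d → ℝ) × (Fin d → ℝ)) : L :=
  ∑ i, ts.1 i • B (yoI i) + ∑ k, ts.2 k • B (xI k)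

section Gd

variable {d : ℕ} (hd : 2 ≤ d) {L : Type*} [LieRing L] [LieAlgebra ℝ L]
  {B : Module.Basis (Idx d) ℝ L} {ℓ : Module.Dual ℝ L}

theorem coad_oddYXComb_apply_xI (hbr : ∀ a b : Idx d, ⁅B a, B b⁆ = gdBr hd (fun c => B c) a b)
    (ts : (Fin d → ℝ) × (Fin d → ℝ)) (i : Fin d) :
    coad (oddYXComb B ts) ℓ (B (xI i)) = ts.1 i * ℓ (B (zI ⟨0, by omega⟩)) := by
  simp [oddYXComb, lie_sum, hbr]

theorem coad_oddYXComb_apply_yoI (hbr : ∀ a b : Idx d, ⁅B a, B b⁆ = gdBr hd (fun c => B c) a b)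
    (ts : (Fin d → ℝ) × (Fin d → ℝ)) (i : Fin d) :
    coad (oddYXComb B ts) ℓ (B (yoI i)) = -(ts.2 i * ℓ (B (zI ⟨0, by omega⟩))) := by
  simp [oddYXComb, lie_sum, hbr]

theorem coad_zI (hbr : ∀ a b : Idx d, ⁅B a, B b⁆ = gdBr hd (fun c => B c) a b) (j : Fin d) :
    coad (B (zI j)) ℓ = 0 :=
  B.ext fun a => by simp [hbr]

theorem coad_yeI (hbr : ∀ a b : Idx d, ⁅B a, B b⁆ = gdBr hd (fun c => B c) a b)
    (hℓ : ℓ (B (zI ⟨0, by omega⟩)) ≠ 0) (i : Fin d) :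
    coad (B (yeI i)) ℓ =
      (ℓ (gdW hd (fun c => B c) i) / ℓ (B (zI ⟨0, by omega⟩))) • coad (B (yoI i)) ℓ := by
  refine B.ext (Idx.forall.2 ⟨fun j => ?_, fun j => ?_, fun j => ?_, fun j => ?_⟩) <;>
    simp only [coad_apply, LinearMap.smul_apply, hbr, gdBr_xI_yeI, gdBr_xI_yoI, gdBr_zI_left,
      gdBr_yoI_yoI, gdBr_yoI_yeI, gdBr_yeI_yoI, gdBr_yeI_yeI, map_zero, mul_zero, smul_eq_mul]
  split_ifs with hji
  · subst hji
    field_simp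
  · simp

theorem coad_eq_coad_oddYXComb (hbr : ∀ a b : Idx d, ⁅B a, B b⁆ = gdBr hd (fun c => B c) a b)
    (hℓ : ℓ (B (zI ⟨0, by omega⟩)) ≠ 0) (X : L) :
    coad X ℓ = coad (oddYXComb B (fun i => B.repr X (yoI i) + B.repr X (yeI i) *
      (ℓ (gdW hd (fun c => B c) i) / ℓ (B (zI ⟨0, by omega⟩))), fun k => B.repr X (xI k))) ℓ := by
  conv_lhs => rw [← B.sum_repr X]
  simp only [oddYXComb, ← coadLinearMap_apply, map_add, map_sum, map_smul, Idx.sum_univ]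
  simp only [coadLinearMap_apply, coad_zI hd hbr, coad_yeI hd hbr hℓ, smul_zero,
    Finset.sum_const_zero, zero_add, add_smul, mul_smul, Finset.sum_add_distrib]

theorem coad_oddYXComb_injective (hbr : ∀ a b : Idx d, ⁅B a, B b⁆ = gdBr hd (fun c => B c) a b)
    (hℓ : ℓ (B (zI ⟨0, by omega⟩)) ≠ 0) :
    Function.Injective fun ts => coad (oddYXComb B ts) ℓ := by
  intro ts ts' h
  have h_t (i : Fin d) : ts.1 i = ts'.1 i := by
    have := congrArg (· (B (xI i))) h
    simp only [coad_oddYXComb_apply_xI hd hbr] at this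
    exact mul_right_cancel₀ hℓ this
  have h_s (i : Fin d) : ts.2 i = ts'.2 i := by
    have := congrArg (· (B (yoI i))) h
    simp only [coad_oddYXComb_apply_yoI hd hbr, neg_inj] at this
    exact mul_right_cancel₀ hℓ this
  exact Prod.ext (funext h_t) (funext h_s)

theorem range_coad_oddYXComb (hbr : ∀ a b : Idx d, ⁅B a, B b⁆ = gdBr hd (fun c => B c) a b)
    (hℓ : ℓ (B (zI ⟨0, by omega⟩)) ≠ 0) :
    Set.range (fun ts => coad (oddYXComb B ts) ℓ) = Set.range fun X => coad X ℓ := by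
  refine (Set.range_comp_subset_range (oddYXComb B) (coad · ℓ)).antisymm ?_
  rintro _ ⟨X, rfl⟩
  exact ⟨_, (coad_eq_coad_oddYXComb hd hbr hℓ X).symm⟩

end Gd

/-- For every `d ≥ 2` and every `ℓ ∈ 𝔤_d*` with `ℓ(Z_1) ≠ 0`, the map
`(t,s) ↦ ℓ + ad*_{t_1 Y_1 + … + t_d Y_{2d−1} + s_1 X_1 + … + s_d X_d} ℓ` is a bijection
from `ℝ^{2d}` onto the coadjoint orbit `{ℓ + ad*_X ℓ : X ∈ 𝔤_d}` of `ℓ`. -/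
theorem orbit_parametrization_gd (d : ℕ) (hd : 2 ≤ d) (L : Type) [LieRing L]
    [LieAlgebra ℝ L] (B : Module.Basis (Idx d) ℝ L)
    (hbr : ∀ a b : Idx d, ⁅B a, B b⁆ = gdBr hd (fun c => B c) a b)
    (ℓ : Module.Dual ℝ L) (hℓ : ℓ (B (zI ⟨0, by omega⟩)) ≠ 0) :
    Set.BijOn
      (fun ts : (Fin d → ℝ) × (Fin d → ℝ) =>
        ℓ + coad (∑ i : Fin d, ts.1 i • B (yoI i) + ∑ k : Fin d, ts.2 k • B (xI k)) ℓ)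
      Set.univ {g : Module.Dual ℝ L | ∃ X : L, g = ℓ + coad X ℓ} :=
  Set.bijOn_const_add_univ_of_range_eq ℓ (coad_oddYXComb_injective hd hbr hℓ)
    (range_coad_oddYXComb hd hbr hℓ)
end

section
/- For every integer d ≥ 2, the cortex of 𝔤_d* is the projective algebraic set Cor(𝔤_d*) = {ℓ ∈ 𝔤_d* : ℓ(Z_1) = ⋯ = ℓ(Z_d) = 0 and Q_d(ℓ(Y_1), …, ℓ(Y_{2d})) = 0}, where Q_d is the homogeneous polynomial of degree d given by Q_d(η_1,…,η_{2d}) = η_{2d−1}·Σ_{i=1}^{d−1}(η_{2i}·∏_{j=1, j≠i}^{d−1} η_{2j−1}) − η_{2d}·∏_{j=1}^{d−1} η_{2j−1}. -/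
/-!
For `X ∈ 𝔤_d` with `X_i`-coordinates `-α_i` and `ℓ ∈ 𝔤_d*`, the functional `ad*_X ℓ` vanishes on
the centre and takes the values `α_i ℓ(Z_1)` at `Y_{2i-1}` and `α_i w_i` at `Y_{2i}`, where
`w_i = ℓ⁅X_i, Y_{2i}⁆`. The relation `⁅X_d, Y_{2d}⁆ = ∑_{k<d} ⁅X_k, Y_{2k}⁆` gives
`∑_j σ_j w_j = 0` for `σ = (1, …, 1, -1)`, and all such `α`, `w` (and all values at the `X_i`)
occur. As `Q_d(a, b) = ∑_j σ_j b_j ∏_{i ≠ j} a_i`, we get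
`Q_d(t α, α w) = t^{d-1} (∏ α) ∑_j σ_j w_j = 0`, so the cortex lies in the closed set
`{ℓ(Z_i) = 0, Q_d = 0}`. Conversely, if `Q_d(a, b) = 0` and `b` vanishes wherever `a` does, then
`b = a w` with `∑_j σ_j w_j = 0`. Otherwise `a` is a limit of such points: if `a` and `b` have a
common zero, push the zeros of `a` at which `b ≠ 0` off zero; if not, `a` has at least two zeros,
and these move along a curve on which the terms `σ_j b_j / α_j` cancel.
-/

open Finset Filter Topology

section Cofactor

variable {ι : Type*} [Fintype ι] [DecidableEq ι]

def sumCofactor (c a b : ι → ℝ) : ℝ := ∑ j, c j * b j * ∏ i ∈ univ.erase j, a i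

def kerFactors (c b : ι → ℝ) : Set (ι → ℝ) := {α | ∃ w, ∑ j, c j * w j = 0 ∧ α * w = b}

variable {c a b : ι → ℝ}

theorem sumCofactor_mul (c a w : ι → ℝ) :
    sumCofactor c a (a * w) = (∏ i, a i) * ∑ j, c j * w j := by
  rw [sumCofactor, mul_sum]
  refine sum_congr rfl fun j _ => ?_
  rw [Pi.mul_apply, ← mul_prod_erase univ a (mem_univ j)]
  ring

theorem sumCofactor_mul_const (c a b : ι → ℝ) (t : ℝ) :
    sumCofactor c (fun i => a i * t) b = t ^ (Fintype.card ι - 1) * sumCofactor c a b := by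
  rw [sumCofactor, sumCofactor, mul_sum]
  refine sum_congr rfl fun j _ => ?_
  rw [prod_mul_distrib, prod_const, card_erase_of_mem (mem_univ j), card_univ]
  ring

theorem sumCofactor_of_apply_eq_zero {j : ι} (ha : a j = 0) :
    sumCofactor c a b = c j * b j * ∏ i ∈ univ.erase j, a i := by
  rw [sumCofactor, sum_eq_single j]
  · intro i _ hij
    rw [prod_eq_zero (mem_erase.2 ⟨Ne.symm hij, mem_univ j⟩) ha, mul_zero]
  · exact fun h => absurd (mem_univ j) h

theorem mem_kerFactors (hc : ∀ j, c j ≠ 0) (hab : ∀ j, a j = 0 → b j = 0)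
    (hQ : sumCofactor c a b = 0) : a ∈ kerFactors c b := by
  have hdiv : a * (b / a) = b := funext fun j => by
    by_cases h : a j = 0
    · simp [h, hab j h]
    · simp [mul_div_cancel₀ _ h]
  by_cases hzero : ∃ j, a j = 0
  · obtain ⟨j₀, hj₀⟩ := hzero
    -- the coordinate `w j₀` is unconstrained by `a * w = b`, so it absorbs the linear condition
    refine ⟨b / a - ((∑ j, c j * (b / a) j) / c j₀) • Pi.single j₀ 1, ?_, ?_⟩
    · simp only [Pi.sub_apply, Pi.smul_apply, smul_eq_mul, mul_sub, sum_sub_distrib]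
      simp [Pi.single_apply, mul_div_cancel₀ _ (hc j₀)]
    · rw [mul_sub, hdiv, sub_eq_self]
      ext j
      by_cases h : j = j₀ <;> simp [h, hj₀]
  · push Not at hzero
    refine ⟨b / a, ?_, hdiv⟩
    have := sumCofactor_mul c a (b / a)
    rw [hdiv, hQ, zero_eq_mul] at this
    exact this.resolve_left (prod_ne_zero_iff.2 fun j _ => hzero j)

theorem mem_closure_kerFactors_of_common_zero (hc : ∀ j, c j ≠ 0) {j₁ : ι} (ha : a j₁ = 0)
    (hb : b j₁ = 0) : a ∈ closure (kerFactors c b) := by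
  let e : ι → ℝ := fun j => if a j = 0 ∧ b j ≠ 0 then 1 else 0
  have hmem : ∀ t : ℝ, 0 < t → a + t • e ∈ kerFactors c b := by
    intro t ht
    have he : (a + t • e) j₁ = 0 := by simp [e, ha, hb]
    refine mem_kerFactors hc (fun j hj => ?_) ?_
    · by_contra hbj
      by_cases haj : a j = 0 <;> simp [e, haj, hbj, ht.ne'] at hj
    · rw [sumCofactor_of_apply_eq_zero he, hb, mul_zero, zero_mul]
  have hlim : Tendsto (fun t : ℝ => a + t • e) (𝓝[>] 0) (𝓝 a) := by
    have : Continuous fun t : ℝ => a + t • e := by fun_prop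
    simpa using this.continuousAt.tendsto.mono_left (nhdsWithin_le_nhds (a := (0 : ℝ)))
  exact mem_closure_of_tendsto hlim (eventually_nhdsWithin_of_forall hmem)

theorem mem_closure_kerFactors_of_two_zeros (hc : ∀ j, c j ≠ 0) {j₁ j₂ : ι} (h₁₂ : j₁ ≠ j₂)
    (h₁ : a j₁ = 0) (h₂ : a j₂ = 0) (hb : ∀ j, a j = 0 → b j ≠ 0) :
    a ∈ closure (kerFactors c b) := by
  set Z := univ.filter fun j => a j = 0
  set C := ∑ j ∈ univ.filter (fun j => ¬ a j = 0), c j * b j / a j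
  set m : ℝ := ((Z.erase j₁).card : ℝ)
  have hm : 0 < m := Nat.cast_pos.2 <| card_pos.2 ⟨j₂, by simp [Z, h₁₂.symm, h₂]⟩
  have hcb : ∀ j, a j = 0 → c j * b j ≠ 0 := fun j hj => mul_ne_zero (hc j) (hb j hj)
  -- along the curve every zero of `a` other than `j₁` contributes `1 / t` to `∑ c b / α`, and
  -- the coordinate `j₁` is chosen so that the total vanishes
  set den : ℝ → ℝ := fun t => -(C * t) - m
  have hden0 : den 0 ≠ 0 := by simp [den, hm.ne']
  set α : ℝ → ι → ℝ := fun t j =>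
    if a j = 0 then (if j = j₁ then c j * b j * t / den t else c j * b j * t) else a j
  have hα₁ : ∀ t, α t j₁ = c j₁ * b j₁ * t / den t := by simp [α, h₁]
  have hαZ : ∀ t j, a j = 0 → j ≠ j₁ → α t j = c j * b j * t := by simp +contextual [α]
  have hαnZ : ∀ t j, a j ≠ 0 → α t j = a j := by simp +contextual [α]
  have hmem : ∀ t, t ≠ 0 → den t ≠ 0 → α t ∈ kerFactors c b := by
    intro t ht hdt
    have hα : ∀ j, α t j ≠ 0 := fun j => by
      by_cases haj : a j = 0
      · by_cases hj : j = j₁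
        · subst hj; rw [hα₁]; exact div_ne_zero (mul_ne_zero (hcb j haj) ht) hdt
        · rw [hαZ t j haj hj]; exact mul_ne_zero (hcb j haj) ht
      · rwa [hαnZ t j haj]
    refine ⟨b / α t, ?_, funext fun j => mul_div_cancel₀ _ (hα j)⟩
    have hZ : ∀ j ∈ Z.erase j₁, c j * (b / α t) j = 1 / t := fun j hj => by
      obtain ⟨hj, hjZ⟩ := mem_erase.1 hj
      have haj : a j = 0 := (mem_filter.1 hjZ).2
      rw [Pi.div_apply, hαZ t j haj hj]
      field_simp [hc j, hb j haj]
    have hZ₁ : c j₁ * (b / α t) j₁ = den t / t := by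
      rw [Pi.div_apply, hα₁]
      field_simp [hc j₁, hb j₁ h₁]
    have hnZ : ∀ j ∈ univ.filter (fun j => ¬ a j = 0), c j * (b / α t) j = c j * b j / a j :=
      fun j hj => by rw [Pi.div_apply, hαnZ t j (mem_filter.1 hj).2, mul_div_assoc]
    rw [← sum_filter_add_sum_filter_not univ (fun j => a j = 0), sum_congr rfl hnZ,
      ← add_sum_erase Z _ (mem_filter.2 ⟨mem_univ _, h₁⟩), hZ₁, sum_congr rfl hZ, sum_const,
      nsmul_eq_mul]
    field_simp
    ring
  have hcont : ContinuousAt α 0 := by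
    refine continuousAt_pi.2 fun j => ?_
    by_cases haj : a j = 0
    · by_cases hj : j = j₁
      · subst hj
        rw [funext hα₁]
        exact ContinuousAt.div (by fun_prop) (by fun_prop) hden0
      · rw [funext fun t => hαZ t j haj hj]; fun_prop
    · rw [funext fun t => hαnZ t j haj]; fun_prop
  have hα0 : α 0 = a := funext fun j => by by_cases haj : a j = 0 <;> simp [α, haj]
  have hlim : Tendsto α (𝓝[≠] 0) (𝓝 a) := hα0 ▸ hcont.tendsto.mono_left nhdsWithin_le_nhds
  have hden : ∀ᶠ t in 𝓝[≠] 0, den t ≠ 0 :=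
    nhdsWithin_le_nhds (ContinuousAt.eventually_ne (by fun_prop) hden0)
  exact mem_closure_of_tendsto hlim
    (by filter_upwards [self_mem_nhdsWithin, hden] with t ht hdt using hmem t ht hdt)

theorem mem_closure_kerFactors (hc : ∀ j, c j ≠ 0) (hQ : sumCofactor c a b = 0) :
    a ∈ closure (kerFactors c b) := by
  by_cases hab : ∀ j, a j = 0 → b j = 0
  · exact subset_closure (mem_kerFactors hc hab hQ)
  push Not at hab
  obtain ⟨j₀, ha₀, hb₀⟩ := hab
  by_cases hcommon : ∃ j₁, a j₁ = 0 ∧ b j₁ = 0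
  · obtain ⟨j₁, ha₁, hb₁⟩ := hcommon
    exact mem_closure_kerFactors_of_common_zero hc ha₁ hb₁
  push Not at hcommon
  -- a single zero `j₀` of `a` would make `sumCofactor c a b = c j₀ b j₀ ∏_{i ≠ j₀} a i` nonzero
  rw [sumCofactor_of_apply_eq_zero ha₀, mul_eq_zero, mul_eq_zero, prod_eq_zero_iff] at hQ
  obtain ⟨j₁, hj₁, ha₁⟩ := hQ.resolve_left (by simp [hc j₀, hb₀])
  exact mem_closure_kerFactors_of_two_zeros hc (ne_of_mem_erase hj₁) ha₁ ha₀ hcommon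

end Cofactor

section Qd

variable {d : ℕ} (hd : 2 ≤ d)

def frontIdx (d : ℕ) : Finset (Fin d) := univ.filter fun j : Fin d => (j : ℕ) < d - 1

def lastIdx : Fin d := ⟨d - 1, by omega⟩

def qSign (j : Fin d) : ℝ := if j = lastIdx hd then -1 else 1

theorem lastIdx_notMem_frontIdx : lastIdx hd ∉ frontIdx d := by simp [frontIdx, lastIdx]

theorem insert_lastIdx_frontIdx : insert (lastIdx hd) (frontIdx d) = univ := by
  ext j
  simp only [frontIdx, lastIdx, mem_insert, mem_filter, mem_univ, true_and, iff_true, Fin.ext_iff]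
  omega

theorem sum_qSign_mul (w : Fin d → ℝ) :
    ∑ j, qSign hd j * w j = ∑ j ∈ frontIdx d, w j - w (lastIdx hd) := by
  rw [← insert_lastIdx_frontIdx hd, sum_insert (lastIdx_notMem_frontIdx hd)]
  have hfront : ∀ j ∈ frontIdx d, qSign hd j * w j = w j := fun j hj => by
    rw [qSign, if_neg (ne_of_mem_of_not_mem hj (lastIdx_notMem_frontIdx hd)), one_mul]
  rw [sum_congr rfl hfront, qSign, if_pos rfl]
  ring

theorem qSign_ne_zero (j : Fin d) : qSign hd j ≠ 0 := by
  unfold qSign; split_ifs <;> norm_num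

theorem Qd_eq_sumCofactor (ηo ηe : Fin d → ℝ) :
    Qd d hd ηo ηe = sumCofactor (qSign hd) ηo ηe := by
  have hnot := lastIdx_notMem_frontIdx hd
  have hfilter : ∀ i : Fin d, univ.filter (fun j : Fin d => (j : ℕ) < d - 1 ∧ j ≠ i)
      = (frontIdx d).erase i := fun i => by
    ext j
    simp [frontIdx, and_comm]
  have hfront : ∀ i ∈ frontIdx d,
      qSign hd i * ηe i * ∏ j ∈ (insert (lastIdx hd) (frontIdx d)).erase i, ηo j
        = ηo (lastIdx hd) * (ηe i * ∏ j ∈ (frontIdx d).erase i, ηo j) := fun i hi => by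
    have hi' : i ≠ lastIdx hd := ne_of_mem_of_not_mem hi hnot
    rw [qSign, if_neg hi', erase_insert_of_ne hi'.symm,
      prod_insert fun h => hnot (mem_of_mem_erase h)]
    ring
  simp only [Qd, hfilter]
  change ηo (lastIdx hd) * ∑ i ∈ frontIdx d, ηe i * ∏ j ∈ (frontIdx d).erase i, ηo j
    - ηe (lastIdx hd) * ∏ j ∈ frontIdx d, ηo j = _
  rw [sumCofactor, ← insert_lastIdx_frontIdx hd, sum_insert hnot, erase_insert hnot,
    sum_congr rfl hfront, ← mul_sum, qSign, if_pos rfl]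
  ring

theorem isClosed_setOf_zI_eq_zero_and_Qd_eq_zero :
    IsClosed {c : Idx d → ℝ |
      (∀ i, c (zI i) = 0) ∧ Qd d hd (fun i => c (yoI i)) (fun i => c (yeI i)) = 0} := by
  simp only [Set.ofPred_and, Set.ofPred_forall, Qd_eq_sumCofactor, sumCofactor]
  exact (isClosed_iInter fun i => isClosed_eq (continuous_apply _) continuous_const).inter
    (isClosed_eq (by fun_prop) continuous_const)

end Qd

section StructureConstants

variable {d : ℕ} (hd : 2 ≤ d) {V : Type*} [AddCommGroup V] (Bf : Idx d → V)

theorem gdW_lastIdx : gdW hd Bf (lastIdx hd) = ∑ j ∈ frontIdx d, gdW hd Bf j := by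
  rw [gdW, dif_neg (by simp [lastIdx])]
  symm
  refine sum_bij (fun j hj => ⟨j + 1, by have := (mem_filter.1 hj).2; omega⟩) ?_ ?_ ?_ ?_
  · simp
  · intro i _ j _ h
    simpa [Fin.ext_iff] using h
  · intro m hm
    have hm0 := (mem_filter.1 hm).2
    exact ⟨⟨m - 1, by omega⟩, by simp [frontIdx]; omega, by ext; simp; omega⟩
  · intro j hj
    rw [gdW, dif_pos (mem_filter.1 hj).2]

theorem gdBr_zI (i : Fin d) (v : Idx d) : gdBr hd Bf (zI i) v = 0 := by
  rcases v with _ | _ | _ | _ <;> rfl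

theorem gdBr_yoI (m : Fin d) (v : Idx d) :
    gdBr hd Bf (yoI m) v = if v = xI m then -Bf (zI ⟨0, by omega⟩) else 0 := by
  rcases v with _ | _ | _ | j <;> simp [gdBr, yoI, xI, eq_comm]

theorem gdBr_yeI (m : Fin d) (v : Idx d) :
    gdBr hd Bf (yeI m) v = if v = xI m then -gdW hd Bf m else 0 := by
  rcases v with _ | _ | _ | j <;> simp +contextual [gdBr, yeI, xI, eq_comm]

theorem gdBr_xI (m : Fin d) (v : Idx d) :
    gdBr hd Bf (xI m) v = (if v = yoI m then Bf (zI ⟨0, by omega⟩) else 0)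
      + (if v = yeI m then gdW hd Bf m else 0) := by
  rcases v with _ | _ | _ | j <;> simp [gdBr, yoI, yeI, xI, eq_comm]

end StructureConstants

section Coadjoint

variable {d : ℕ} {hd : 2 ≤ d} {L : Type} [LieRing L] [LieAlgebra ℝ L]
  {B : Module.Basis (Idx d) ℝ L}

variable (hbr : ∀ a b : Idx d, ⁅B a, B b⁆ = gdBr hd (fun c => B c) a b)
include hbr

theorem coad_basis (X : L) (ℓ : Module.Dual ℝ L) (u : Idx d) :
    coad X ℓ (B u) = ∑ v, B.repr X v * ℓ (gdBr hd (fun c => B c) u v) := by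
  change ℓ ⁅B u, X⁆ = _
  conv_lhs => rw [← B.sum_repr X]
  simp only [lie_sum, lie_smul, hbr, map_sum, map_smul, smul_eq_mul]

theorem coad_zI_s8 (X : L) (ℓ : Module.Dual ℝ L) (i : Fin d) : coad X ℓ (B (zI i)) = 0 := by
  simp [coad_basis hbr, gdBr_zI]

theorem coad_yoI (X : L) (ℓ : Module.Dual ℝ L) (m : Fin d) :
    coad X ℓ (B (yoI m)) = -B.repr X (xI m) * ℓ (B (zI ⟨0, by omega⟩)) := by
  simp only [coad_basis hbr, gdBr_yoI, apply_ite ℓ, map_neg, map_zero, mul_ite, mul_zero,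
    sum_ite_eq', mem_univ, if_true, mul_neg, neg_mul]

theorem coad_yeI_s8 (X : L) (ℓ : Module.Dual ℝ L) (m : Fin d) :
    coad X ℓ (B (yeI m)) = -B.repr X (xI m) * ℓ (gdW hd (fun c => B c) m) := by
  simp only [coad_basis hbr, gdBr_yeI, apply_ite ℓ, map_neg, map_zero, mul_ite, mul_zero,
    sum_ite_eq', mem_univ, if_true, mul_neg, neg_mul]

theorem coad_xI (X : L) (ℓ : Module.Dual ℝ L) (m : Fin d) :
    coad X ℓ (B (xI m)) = B.repr X (yoI m) * ℓ (B (zI ⟨0, by omega⟩))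
      + B.repr X (yeI m) * ℓ (gdW hd (fun c => B c) m) := by
  simp only [coad_basis hbr, gdBr_xI, map_add, apply_ite ℓ, map_zero, mul_add, mul_ite, mul_zero,
    sum_add_distrib, sum_ite_eq', mem_univ, if_true]

end Coadjoint

section Cortex

variable {d : ℕ} {hd : 2 ≤ d} {L : Type} [LieRing L] [LieAlgebra ℝ L]
  {B : Module.Basis (Idx d) ℝ L}

theorem sum_qSign_mul_eval_gdW (ℓ : Module.Dual ℝ L) :
    ∑ j, qSign hd j * ℓ (gdW hd (fun c => B c) j) = 0 := by
  rw [sum_qSign_mul, gdW_lastIdx, map_sum, sub_self]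

theorem exists_dual_eval_gdW (w : Fin d → ℝ) (hw : ∑ j, qSign hd j * w j = 0) :
    ∃ ℓ : Module.Dual ℝ L, ℓ (B (zI ⟨0, by omega⟩)) = 1 ∧
      ∀ m, ℓ (gdW hd (fun c => B c) m) = w m := by
  -- `Z_1` and the `gdW` on `frontIdx d` are the distinct basis vectors `Z_1, …, Z_d`, so `ℓ` can be
  -- prescribed on them; the value at `gdW (lastIdx hd)` is then forced by `hw`
  let v : Fin d → ℝ := fun i => if h : (i : ℕ) = 0 then 1 else w ⟨i - 1, by omega⟩
  let ℓ : Module.Dual ℝ L := B.constr ℝ (Sum.elim v 0)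
  have hfront : ∀ m ∈ frontIdx d, ℓ (gdW hd (fun c => B c) m) = w m := fun m hm => by
    rw [gdW, dif_pos (mem_filter.1 hm).2]
    simp [ℓ, v, zI]
  refine ⟨ℓ, by simp [ℓ, v, zI], fun m => ?_⟩
  rcases mem_insert.1 (insert_lastIdx_frontIdx hd ▸ mem_univ m) with rfl | hm
  · rw [sum_qSign_mul, sub_eq_zero] at hw
    rw [gdW_lastIdx, map_sum, sum_congr rfl hfront, hw]
  · exact hfront m hm

variable (hbr : ∀ a b : Idx d, ⁅B a, B b⁆ = gdBr hd (fun c => B c) a b)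
include hbr

theorem Qd_eq_zero_of_mem_adStar {g : Module.Dual ℝ L} (hg : g ∈ adStar L) :
    (∀ i, g (B (zI i)) = 0) ∧ Qd d hd (fun i => g (B (yoI i))) (fun i => g (B (yeI i))) = 0 := by
  obtain ⟨X, ℓ, rfl⟩ := hg
  refine ⟨coad_zI_s8 hbr X ℓ, ?_⟩
  let α : Fin d → ℝ := fun m => -B.repr X (xI m)
  let w : Fin d → ℝ := fun m => ℓ (gdW hd (fun c => B c) m)
  have hyo : (fun i => coad X ℓ (B (yoI i))) = fun i => α i * ℓ (B (zI ⟨0, by omega⟩)) :=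
    funext (coad_yoI hbr X ℓ)
  have hye : (fun i => coad X ℓ (B (yeI i))) = α * w := funext (coad_yeI_s8 hbr X ℓ)
  rw [hyo, hye, Qd_eq_sumCofactor, sumCofactor_mul_const, sumCofactor_mul,
    sum_qSign_mul_eval_gdW, mul_zero, mul_zero]

theorem sumElim_mem_image_adStar (α w ξ : Fin d → ℝ) (hw : ∑ j, qSign hd j * w j = 0) :
    Sum.elim (0 : Fin d → ℝ) (Sum.elim α (Sum.elim (α * w) ξ)) ∈ coords B '' adStar L := by
  obtain ⟨ℓ, hℓ₀, hℓ⟩ := exists_dual_eval_gdW (B := B) w hw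
  let x : Idx d → ℝ := Sum.elim 0 (Sum.elim ξ (Sum.elim 0 (-α)))
  let X : L := B.equivFun.symm x
  have hX : ∀ v, B.repr X v = x v := fun v => by
    rw [← B.equivFun_apply, LinearEquiv.apply_symm_apply]
  refine ⟨coad X ℓ, ⟨X, ℓ, rfl⟩, funext fun u => ?_⟩
  rcases u with i | m | m | m
  · exact coad_zI_s8 hbr X ℓ i
  · show coad X ℓ (B (yoI m)) = α m
    simp [coad_yoI hbr, hX, x, hℓ₀, xI]
  · show coad X ℓ (B (yeI m)) = α m * w m
    simp [coad_yeI_s8 hbr, hX, x, hℓ, xI]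
  · show coad X ℓ (B (xI m)) = ξ m
    simp [coad_xI hbr, hX, x, hℓ₀, yoI, yeI]

end Cortex

/-- For every `d ≥ 2`, the cortex of `𝔤_d*` is the projective algebraic set
`{ℓ : ℓ(Z_1) = ⋯ = ℓ(Z_d) = 0 and Q_d(ℓ(Y_1),…,ℓ(Y_{2d})) = 0}`, where `Q_d` is the
homogeneous polynomial of degree `d` of the statement. -/
theorem cortex_gd (d : ℕ) (hd : 2 ≤ d) (L : Type) [LieRing L] [LieAlgebra ℝ L]
    (B : Module.Basis (Idx d) ℝ L)
    (hbr : ∀ a b : Idx d, ⁅B a, B b⁆ = gdBr hd (fun c => B c) a b) :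
    corSet B = {f : Module.Dual ℝ L |
        (∀ i : Fin d, f (B (zI i)) = 0) ∧
        Qd d hd (fun i => f (B (yoI i))) (fun i => f (B (yeI i))) = 0} := by
  ext f
  simp only [corSet, Set.mem_ofPred_eq]
  constructor
  · refine fun hf => closure_minimal ?_ (isClosed_setOf_zI_eq_zero_and_Qd_eq_zero hd) hf
    rintro _ ⟨g, hg, rfl⟩
    exact Qd_eq_zero_of_mem_adStar hbr hg
  · rintro ⟨hz, hQ⟩
    set b : Fin d → ℝ := fun i => f (B (yeI i))
    set ξ : Fin d → ℝ := fun i => f (B (xI i))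
    have hcoords : coords B f =
        Sum.elim (0 : Fin d → ℝ) (Sum.elim (fun i => f (B (yoI i))) (Sum.elim b ξ)) := by
      funext u
      rcases u with i | _ | _ | _
      exacts [hz i, rfl, rfl, rfl]
    rw [hcoords]
    refine map_mem_closure (f := fun α => Sum.elim (0 : Fin d → ℝ) (Sum.elim α (Sum.elim b ξ))) ?_
      (mem_closure_kerFactors (qSign_ne_zero hd) (Qd_eq_sumCofactor hd _ _ ▸ hQ)) ?_
    · exact continuous_pi fun u => by rcases u with _ | _ | _ | _ <;>
      simp only [Sum.elim_inl, Sum.elim_inr] <;> fun_prop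
    · rintro α ⟨w, hw, hb⟩
      simpa only [hb] using sumElim_mem_image_adStar hbr α w ξ hw
end

section
/- For every integer d ≥ 2, every f ∈ 𝔤_d* with f(Z_1) = ⋯ = f(Z_d) = 0 and Q_d(f(Y_1), …, f(Y_{2d})) = 0 lies in the closure of the set {ad*_X ℓ : X ∈ 𝔤_d, ℓ ∈ 𝔤_d*}; here Q_d(η_1,…,η_{2d}) = η_{2d−1}·Σ_{i=1}^{d−1}(η_{2i}·∏_{j=1, j≠i}^{d−1} η_{2j−1}) − η_{2d}·∏_{j=1}^{d−1} η_{2j−1}. -/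
/-! With `ℓ(Z_1) = 1`, `ℓ(Z_{k+1}) = u_k` and `X = -∑ o_i X_i + ∑ c_i Y_{2i-1}`, the functional
`ad*_X ℓ` vanishes on the centre, takes the arbitrary values `c_i` on `X_i` and `o_i` on `Y_{2i-1}`,
the value `o_i u_i` on `Y_{2i}` for `i < d` and `o_d (u_1 + ⋯ + u_{d-1})` on `Y_{2d}`.

If `f(Y_{2i-1}) ≠ 0` for all `i < d`, then `Q_d(f) = 0` says exactly that `f` itself has this form,
with `u_i = f(Y_{2i}) / f(Y_{2i-1})`. A vanishing `f(Y_{2i-1})` is instead approached by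
`f(Y_{2i}) / u_i` with `u_i → ∞`; the blow-up of `∑ u_i` is then compensated either by letting
`o_d → 0` (when `f(Y_{2d-1}) = 0`) or by one more coordinate `u_i → -∞`. The only obstruction is a
single vanishing `f(Y_{2i-1})` with `f(Y_{2i}) ≠ 0` and `f(Y_{2d-1}) ≠ 0`, and it is excluded
precisely by `Q_d(f) = 0`. -/

open Finset Filter Topology

def lowIdx (d : ℕ) : Finset (Fin d) := univ.filter fun k : Fin d => (k : ℕ) < d - 1

lemma mem_lowIdx {d : ℕ} {j : Fin d} : j ∈ lowIdx d ↔ (j : ℕ) < d - 1 := by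
  simp [lowIdx]

lemma eq_of_not_lt_pred {d : ℕ} (hd : 0 < d) {j : Fin d} (hj : ¬ (j : ℕ) < d - 1) :
    j = ⟨d - 1, by omega⟩ := by
  ext; have := j.isLt; simp only; omega

lemma sum_filter_pos_eq_sum_lowIdx {M : Type*} [AddCommMonoid M] {d : ℕ} (g g' : Fin d → M)
    (hg : ∀ k : Fin d, ∀ hk : (k : ℕ) < d - 1, g ⟨k + 1, by omega⟩ = g' k) :
    ∑ m ∈ univ.filter (fun m : Fin d => 0 < (m : ℕ)), g m = ∑ k ∈ lowIdx d, g' k := by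
  symm
  refine sum_bij (fun k hk => ⟨k + 1, by simp [mem_lowIdx] at hk; omega⟩) ?_ ?_ ?_ ?_
  · intro k _; simp
  · intro a _ b _ h; simpa [Fin.ext_iff] using h
  · intro m hm
    simp only [mem_filter, mem_univ, true_and] at hm
    exact ⟨⟨m - 1, by omega⟩, by simp [mem_lowIdx]; omega, by ext; simp; omega⟩
  · intro k hk; exact (hg k (mem_lowIdx.1 hk)).symm

/-- The values on `Y_2, Y_4, …, Y_{2d}` of `ad*_X ℓ` when `o j` is its value on `Y_{2j+1}`,
`ℓ(Z_1) = 1` and `ℓ(Z_{k+2}) = u k`. -/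
def evenCoords (d : ℕ) (o u : Fin d → ℝ) (j : Fin d) : ℝ :=
  o j * if (j : ℕ) < d - 1 then u j else ∑ k ∈ lowIdx d, u k

def realizable (d : ℕ) : Set ((Fin d → ℝ) × (Fin d → ℝ)) :=
  Set.range fun y : (Fin d → ℝ) × (Fin d → ℝ) => (y.1, evenCoords d y.1 y.2)

def centerFreeCoords {d : ℕ} (fx : Fin d → ℝ) (y : (Fin d → ℝ) × (Fin d → ℝ)) : Idx d → ℝ :=
  Sum.elim 0 (Sum.elim y.1 (Sum.elim y.2 fx))

lemma continuous_centerFreeCoords {d : ℕ} (fx : Fin d → ℝ) :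
    Continuous (centerFreeCoords fx) :=
  continuous_pi fun w => by
    rcases w with m | j | j | i <;> simp only [centerFreeCoords, Sum.elim_inl, Sum.elim_inr] <;>
      fun_prop

theorem centerFreeCoords_mem_image_adStar {d : ℕ} (hd : 2 ≤ d) {L : Type} [LieRing L]
    [LieAlgebra ℝ L] {B : Module.Basis (Idx d) ℝ L}
    (hbr : ∀ a b : Idx d, ⁅B a, B b⁆ = gdBr hd (fun c => B c) a b) (o u fx : Fin d → ℝ) :
    centerFreeCoords fx (o, evenCoords d o u) ∈ coords B '' adStar L := by
  set z : Fin d → ℝ := fun m => if hm : (m : ℕ) = 0 then 1 else u ⟨m - 1, by omega⟩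
  set ℓ : Module.Dual ℝ L := B.constr ℝ (Sum.elim z 0)
  set X : L := ∑ i, (-o i) • B (xI i) + ∑ i, fx i • B (yoI i)
  have hℓ : ∀ m, ℓ (B (zI m)) = z m := fun m => B.constr_basis ℝ _ _
  have hℓW : ∀ j, ℓ (gdW hd (fun c => B c) j) =
      if (j : ℕ) < d - 1 then u j else ∑ k ∈ lowIdx d, u k := by
    intro j
    unfold gdW
    split_ifs
    · simp [hℓ, z]
    · simp only [map_sum, hℓ]
      exact sum_filter_pos_eq_sum_lowIdx _ _ fun k hk => by simp [z]
  refine ⟨coad X ℓ, ⟨X, ℓ, rfl⟩, funext fun w => ?_⟩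
  change ℓ ⁅B w, X⁆ = _
  simp only [X, lie_add, lie_sum, lie_smul, hbr]
  rcases w with m | j | j | i
  · simp [gdBr, centerFreeCoords]
  · simp [gdBr, xI, yoI, centerFreeCoords, hℓ, z]
  · simp [gdBr, xI, yoI, centerFreeCoords, hℓW, evenCoords]
  · simp [gdBr, xI, yoI, centerFreeCoords, hℓ, z]

lemma tendsto_div_and_div_mul_cancel {α : Type*} {l : Filter α} {e : ℝ} {u : α → ℝ}
    (h : e = 0 ∨ Tendsto u l (Bornology.cobounded ℝ)) :
    Tendsto (fun t => e / u t) l (𝓝 0) ∧ ∀ᶠ t in l, e / u t * u t = e := by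
  rcases h with rfl | h
  · simpa using tendsto_const_nhds
  · refine ⟨?_, (h.eventually_ne_cobounded 0).mono fun t ht => div_mul_cancel₀ e ht⟩
    simpa [div_eq_mul_inv] using (tendsto_inv₀_cobounded.comp h).const_mul e

theorem mem_closure_realizable_of_tendsto {α : Type*} {l : Filter α} [l.NeBot] {d : ℕ}
    (hd : 0 < d) {o e : Fin d → ℝ} (u : α → Fin d → ℝ) (p : α → ℝ)
    (hu : ∀ j ∈ lowIdx d, o j ≠ 0 → Tendsto (fun t => u t j) l (𝓝 (e j / o j)))
    (hu₀ : ∀ j ∈ lowIdx d, o j = 0 →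
      e j = 0 ∨ Tendsto (fun t => u t j) l (Bornology.cobounded ℝ))
    (hp : Tendsto p l (𝓝 (o ⟨d - 1, by omega⟩)))
    (hpu : Tendsto (fun t => p t * ∑ k ∈ lowIdx d, u t k) l (𝓝 (e ⟨d - 1, by omega⟩))) :
    (o, e) ∈ closure (realizable d) := by
  -- a vanishing `o j` is approached by `e j / u j`, which keeps the even coordinate equal to `e j`
  set o' : α → Fin d → ℝ := fun t j =>
    if (j : ℕ) < d - 1 then (if o j = 0 then e j / u t j else o j) else p t
  have key : ∀ j, Tendsto (fun t => o' t j) l (𝓝 (o j)) ∧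
      Tendsto (fun t => evenCoords d (o' t) (u t) j) l (𝓝 (e j)) := by
    intro j
    by_cases hj : (j : ℕ) < d - 1
    · have hjl : j ∈ lowIdx d := mem_lowIdx.2 hj
      by_cases hoj : o j = 0
      · obtain ⟨hto, hev⟩ := tendsto_div_and_div_mul_cancel (hu₀ j hjl hoj)
        simp only [o', evenCoords, hj, hoj, if_true]
        exact ⟨hoj ▸ hto, tendsto_const_nhds.congr' (hev.mono fun t ht => ht.symm)⟩
      · simp only [o', evenCoords, hj, hoj, if_true, if_false]
        refine ⟨tendsto_const_nhds, ?_⟩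
        simpa [mul_div_cancel₀ _ hoj] using (hu j hjl hoj).const_mul (o j)
    · simp only [o', evenCoords, hj, if_false]
      rw [eq_of_not_lt_pred hd hj]
      exact ⟨hp, hpu⟩
  exact mem_closure_of_tendsto
    ((tendsto_pi_nhds.2 fun j => (key j).1).prodMk_nhds (tendsto_pi_nhds.2 fun j => (key j).2))
    (Eventually.of_forall fun t => ⟨(o' t, u t), rfl⟩)

section Qd

variable {d : ℕ} (hd : 2 ≤ d) {o e : Fin d → ℝ}

lemma Qd_eq_lowIdx : Qd d hd o e = o ⟨d - 1, by omega⟩ *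
      ∑ i ∈ lowIdx d, e i * ∏ j ∈ (lowIdx d).erase i, o j
    - e ⟨d - 1, by omega⟩ * ∏ j ∈ lowIdx d, o j := by
  have : ∀ i : Fin d, univ.filter (fun j : Fin d => (j : ℕ) < d - 1 ∧ j ≠ i)
      = (lowIdx d).erase i := fun i => by ext; simp [lowIdx, and_comm]
  simp only [Qd, this, lowIdx]

lemma Qd_eq_mul_prod (h : ∀ j ∈ lowIdx d, o j ≠ 0) : Qd d hd o e =
    (o ⟨d - 1, by omega⟩ * ∑ j ∈ lowIdx d, e j / o j - e ⟨d - 1, by omega⟩) *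
      ∏ j ∈ lowIdx d, o j := by
  have hsum : ∀ i ∈ lowIdx d, e i * ∏ j ∈ (lowIdx d).erase i, o j
      = e i / o i * ∏ j ∈ lowIdx d, o j := fun i hi => by
    rw [← mul_prod_erase _ _ hi]; field_simp [h i hi]
  rw [Qd_eq_lowIdx, sum_congr rfl hsum, ← sum_mul]
  ring

lemma Qd_eq_of_eq_zero {i : Fin d} (hi : i ∈ lowIdx d) (hoi : o i = 0) :
    Qd d hd o e = o ⟨d - 1, by omega⟩ * (e i * ∏ j ∈ (lowIdx d).erase i, o j) := by
  rw [Qd_eq_lowIdx, prod_eq_zero hi hoi, mul_zero, sub_zero, sum_eq_single_of_mem i hi]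
  intro j _ hji
  rw [prod_eq_zero (mem_erase.2 ⟨Ne.symm hji, hi⟩) hoi, mul_zero]

end Qd

noncomputable def ratioOrElse {d : ℕ} (o e : Fin d → ℝ) (t : ℝ) (j : Fin d) : ℝ :=
  if o j = 0 then t else e j / o j

section RatioOrElse

variable {d : ℕ} {o e : Fin d → ℝ}

lemma tendsto_ratioOrElse_of_ne_zero {j : Fin d} (hoj : o j ≠ 0) :
    Tendsto (fun t => ratioOrElse o e t j) atTop (𝓝 (e j / o j)) := by
  simp [ratioOrElse, hoj]

lemma tendsto_ratioOrElse_of_eq_zero {j : Fin d} (hoj : o j = 0) :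
    Tendsto (fun t => ratioOrElse o e t j) atTop (Bornology.cobounded ℝ) := by
  simp only [ratioOrElse, hoj, if_true]
  exact tendsto_id.mono_right IsOrderBornology.atTop_le_cobounded

lemma tendsto_sum_ratioOrElse_atTop {s : Finset (Fin d)} (h : ∃ j ∈ s, o j = 0) :
    Tendsto (fun t => ∑ j ∈ s, ratioOrElse o e t j) atTop atTop := by
  have hcard : (0 : ℝ) < #(s.filter (o · = 0)) := by
    obtain ⟨j, hj, hoj⟩ := h
    exact_mod_cast card_pos.2 ⟨j, mem_filter.2 ⟨hj, hoj⟩⟩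
  simp only [ratioOrElse, sum_ite, sum_const, nsmul_eq_mul]
  exact tendsto_atTop_add_const_right _ _ (tendsto_id.const_mul_atTop hcard)

end RatioOrElse

theorem mem_realizable_of_Qd_eq_zero {d : ℕ} (hd : 2 ≤ d) {o e : Fin d → ℝ}
    (hQ : Qd d hd o e = 0) (hZ : ∀ j ∈ lowIdx d, o j ≠ 0) : (o, e) ∈ realizable d := by
  have hlast : o ⟨d - 1, by omega⟩ * ∑ j ∈ lowIdx d, e j / o j = e ⟨d - 1, by omega⟩ := by
    rw [Qd_eq_mul_prod hd hZ] at hQ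
    exact sub_eq_zero.1 ((mul_eq_zero.1 hQ).resolve_right (prod_ne_zero_iff.2 hZ))
  refine ⟨(o, fun j => e j / o j), Prod.ext rfl (funext fun j => ?_)⟩
  by_cases hj : (j : ℕ) < d - 1
  · simp [evenCoords, hj, mul_div_cancel₀ _ (hZ j (mem_lowIdx.2 hj))]
  · simp only [evenCoords, hj, if_false]
    rw [eq_of_not_lt_pred (by omega) hj]
    exact hlast

theorem mem_closure_realizable_of_last_eq_zero {d : ℕ} (hd : 0 < d)
    {o e : Fin d → ℝ} {i : Fin d} (hi : i ∈ lowIdx d) (hoi : o i = 0)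
    (hlast : o ⟨d - 1, by omega⟩ = 0) : (o, e) ∈ closure (realizable d) := by
  have hS := tendsto_sum_ratioOrElse_atTop (e := e) ⟨i, hi, hoi⟩
  refine mem_closure_realizable_of_tendsto hd (fun t => ratioOrElse o e t)
    (fun t => e ⟨d - 1, by omega⟩ / ∑ k ∈ lowIdx d, ratioOrElse o e t k)
    (fun j _ hoj => tendsto_ratioOrElse_of_ne_zero hoj)
    (fun j _ hoj => Or.inr (tendsto_ratioOrElse_of_eq_zero hoj)) ?_ ?_
  · simpa [hlast] using tendsto_const_nhds.div_atTop hS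
  · exact tendsto_const_nhds.congr'
      ((hS.eventually_ne_atTop 0).mono fun t ht => (div_mul_cancel₀ _ ht).symm)

theorem mem_closure_realizable_of_Qd_eq_zero_of_last_ne_zero {d : ℕ} (hd : 2 ≤ d)
    {o e : Fin d → ℝ} (hQ : Qd d hd o e = 0) {i : Fin d} (hi : i ∈ lowIdx d) (hoi : o i = 0)
    (hlast : o ⟨d - 1, by omega⟩ ≠ 0) : (o, e) ∈ closure (realizable d) := by
  set S : ℝ → ℝ := fun t => ∑ k ∈ (lowIdx d).erase i, ratioOrElse o e t k
  -- `u i` absorbs the other terms, so that the sum stays at `e_last / o_last`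
  set u : ℝ → Fin d → ℝ := fun t j =>
    if j = i then e ⟨d - 1, by omega⟩ / o ⟨d - 1, by omega⟩ - S t else ratioOrElse o e t j
  have hsum : ∀ t, ∑ k ∈ lowIdx d, u t k = e ⟨d - 1, by omega⟩ / o ⟨d - 1, by omega⟩ := by
    intro t
    rw [← add_sum_erase _ _ hi, sum_congr rfl fun k hk => if_neg (ne_of_mem_erase hk)]
    simp [u, S]
  have hS : e i ≠ 0 → Tendsto S atTop atTop := fun hei => by
    refine tendsto_sum_ratioOrElse_atTop (by_contra fun h => ?_)
    push Not at h
    rw [Qd_eq_of_eq_zero hd hi hoi] at hQ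
    exact mul_ne_zero hlast (mul_ne_zero hei (prod_ne_zero_iff.2 h)) hQ
  refine mem_closure_realizable_of_tendsto (l := atTop) (by omega) u
    (fun _ => o ⟨d - 1, by omega⟩) (fun j _ hoj => ?_) (fun j _ hoj => ?_) tendsto_const_nhds ?_
  · simpa [u, show j ≠ i from fun h => hoj (h ▸ hoi)] using tendsto_ratioOrElse_of_ne_zero hoj
  · by_cases hji : j = i
    · subst hji
      refine or_iff_not_imp_left.2 fun hej => ?_
      simp only [u, if_true, sub_eq_add_neg]
      exact (tendsto_atBot_add_const_left _ _ (tendsto_neg_atTop_atBot.comp (hS hej))).mono_right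
        IsOrderBornology.atBot_le_cobounded
    · simpa [u, hji] using Or.inr (tendsto_ratioOrElse_of_eq_zero (e := e) hoj)
  · simp only [hsum, mul_div_cancel₀ _ hlast]
    exact tendsto_const_nhds

theorem mem_closure_realizable_of_Qd_eq_zero {d : ℕ} (hd : 2 ≤ d) {o e : Fin d → ℝ}
    (hQ : Qd d hd o e = 0) : (o, e) ∈ closure (realizable d) := by
  by_cases hZ : ∀ j ∈ lowIdx d, o j ≠ 0
  · exact subset_closure (mem_realizable_of_Qd_eq_zero hd hQ hZ)
  obtain ⟨i, hi, hoi⟩ : ∃ i ∈ lowIdx d, o i = 0 := by simpa using hZ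
  by_cases hlast : o ⟨d - 1, by omega⟩ = 0
  · exact mem_closure_realizable_of_last_eq_zero (by omega) hi hoi hlast
  · exact mem_closure_realizable_of_Qd_eq_zero_of_last_ne_zero hd hQ hi hoi hlast

/-- For every `d ≥ 2`, every `f ∈ 𝔤_d*` with `f(Z_1) = ⋯ = f(Z_d) = 0` and
`Q_d(f(Y_1),…,f(Y_{2d})) = 0` lies in the closure of `{ad*_X ℓ : X ∈ 𝔤_d, ℓ ∈ 𝔤_d*}`. -/
theorem variety_subset_cortex_gd (d : ℕ) (hd : 2 ≤ d) (L : Type) [LieRing L]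
    [LieAlgebra ℝ L] (B : Module.Basis (Idx d) ℝ L)
    (hbr : ∀ a b : Idx d, ⁅B a, B b⁆ = gdBr hd (fun c => B c) a b)
    (f : Module.Dual ℝ L)
    (hz : ∀ i : Fin d, f (B (zI i)) = 0)
    (hq : Qd d hd (fun i => f (B (yoI i))) (fun i => f (B (yeI i))) = 0) :
    f ∈ corSet B := by
  set fx : Fin d → ℝ := fun i => f (B (xI i))
  have hf : coords B f =
      centerFreeCoords fx (fun i => f (B (yoI i)), fun i => f (B (yeI i))) := by
    funext w
    rcases w with m | j | j | i
    · exact hz m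
    all_goals rfl
  change coords B f ∈ closure _
  rw [hf]
  refine map_mem_closure (continuous_centerFreeCoords fx)
    (mem_closure_realizable_of_Qd_eq_zero hd hq) ?_
  rintro _ ⟨⟨o, u⟩, rfl⟩
  exact centerFreeCoords_mem_image_adStar hd hbr o u fx
end
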